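/- For any sequence x in D, the tail values of 𝔉 converge to 1: lim_{n→∞} 𝔉({x_k}_{k=n}^{∞}) = 1. Moreover the truncations converge: lim_{n→∞} 𝔉(x_1, …, x_n) = 𝔉(x). -/

import Mathlib

open Classical

noncomputable def Fterm (x : ℕ → ℂ) (m : ℕ) (k : Fin m → ℕ) : ℂ :=
  if ∀ i : Fin m, ∀ h : (i : ℕ) + 1 < m, k i + 2 ≤ k ⟨(i : ℕ) + 1, h⟩ then
    ∏ i : Fin m, x (k i) * x (k i + 1)
  else 0

/-- The function 𝔉 applied to the sequence (x 0, x 1, x 2, …), i.e. x is 0-based: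
`x k` represents `x_{k+1}` of the paper. -/
noncomputable def FF (x : ℕ → ℂ) : ℂ :=
  1 + ∑' m : ℕ, (-1 : ℂ) ^ (m + 1) * (∑' k : Fin (m + 1) → ℕ, Fterm x (m + 1) k)

/-- 𝔉 of the finite tuple (x 0, …, x (n-1)), by extending with zeros. -/
noncomputable def FFfin (n : ℕ) (x : ℕ → ℂ) : ℂ :=
  FF fun k => if k < n then x k else 0

/-!
The `m`-th coefficient of `𝔉` is a sum over strictly increasing `m`-tuples. Composing such a
tuple with the `m!` permutations gives distinct tuples of `ℕᵐ`, whose total weight is `sᵐ` for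
`s = ∑ |x_k x_{k+1}|`, so the coefficient is at most `sᵐ / m!` and `|𝔉(x) - 1| ≤ eˢ - 1`. This
tends to `0` along the tails, whose `s` tends to `0`. Along the truncations every term is
eventually equal to the corresponding term for `x` and dominated by it, so Tannery's theorem
(dominated convergence for series) applies to the inner and then to the outer sums.
-/

open Function Equiv Filter Topology
open scoped ENNReal Nat

theorem ENNReal.tsum_fin_pi_prod {α : Type*} (A : α → ℝ≥0∞) (n : ℕ) :
    ∑' k : Fin n → α, ∏ i, A (k i) = (∑' a, A a) ^ n := by
  induction n with
  | zero => simp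
  | succ n ih =>
    rw [← (Fin.consEquiv fun _ => α).tsum_eq, ENNReal.tsum_prod', pow_succ',
      ← ENNReal.tsum_mul_right]
    refine tsum_congr fun a => ?_
    simp [Fin.consEquiv, Fin.prod_univ_succ, ENNReal.tsum_mul_left, ih]

section StrictMonoTuples

variable {α : Type*} [LinearOrder α]

theorem injective_comp_perm_of_strictMono (n : ℕ) :
    Injective fun p : Perm (Fin n) × {k : Fin n → α // StrictMono k} => p.2.1 ∘ p.1 := by
  rintro ⟨σ, k, hk⟩ ⟨τ, l, hl⟩ h
  have hkl : k = l := (hk.range_inj hl).1 <| by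
    simpa only [σ.surjective.range_comp, τ.surjective.range_comp] using congrArg Set.range h
  subst hkl
  have hστ : σ = τ := Equiv.ext fun i => hk.injective (congrFun h i)
  rw [hστ]

theorem ENNReal.factorial_mul_tsum_strictMono_prod_le (A : α → ℝ≥0∞) (n : ℕ) :
    n ! * ∑' k : {k : Fin n → α // StrictMono k}, ∏ i, A (k.1 i) ≤ (∑' a, A a) ^ n := by
  calc (n ! : ℝ≥0∞) * ∑' k : {k : Fin n → α // StrictMono k}, ∏ i, A (k.1 i)
      = ∑' (_ : Perm (Fin n)) (k : {k : Fin n → α // StrictMono k}), ∏ i, A (k.1 i) := by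
        simp [Fintype.card_perm]
    _ = ∑' p : Perm (Fin n) × {k : Fin n → α // StrictMono k}, ∏ i, A ((p.2.1 ∘ p.1) i) := by
        rw [ENNReal.tsum_prod']
        exact tsum_congr fun σ => tsum_congr fun k => (Equiv.prod_comp σ fun i => A (k.1 i)).symm
    _ ≤ ∑' k : Fin n → α, ∏ i, A (k i) :=
        ENNReal.tsum_comp_le_tsum_of_injective (injective_comp_perm_of_strictMono n) _
    _ = (∑' a, A a) ^ n := ENNReal.tsum_fin_pi_prod A n

theorem ENNReal.tsum_strictMono_prod_le (A : α → ℝ≥0∞) (n : ℕ) :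
    ∑' k : {k : Fin n → α // StrictMono k}, ∏ i, A (k.1 i) ≤ (∑' a, A a) ^ n / n ! := by
  rw [ENNReal.le_div_iff_mul_le (by simp [Nat.factorial_ne_zero]) (by simp), mul_comm]
  exact ENNReal.factorial_mul_tsum_strictMono_prod_le A n

end StrictMonoTuples

section Fterm

variable {x y : ℕ → ℂ} {m : ℕ} {k : Fin m → ℕ}

theorem strictMono_of_Fterm_ne_zero (h : Fterm x m k ≠ 0) : StrictMono k := by
  unfold Fterm at h
  split_ifs at h with hk
  · obtain _ | m := m
    · exact fun i => i.elim0
    rw [Fin.strictMono_iff_lt_succ]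
    exact fun i => Nat.lt_of_lt_of_le (by omega) (hk i.castSucc (by simp))
  · exact absurd rfl h

theorem enorm_Fterm_le_prod : ‖Fterm x m k‖ₑ ≤ ∏ i, ‖x (k i) * x (k i + 1)‖ₑ := by
  unfold Fterm
  split_ifs
  · simp [enorm_eq_nnnorm, nnnorm_prod]
  · simp

theorem norm_Fterm_le_of_norm_le (h : ∀ j, ‖y j * y (j + 1)‖ ≤ ‖x j * x (j + 1)‖) :
    ‖Fterm y m k‖ ≤ ‖Fterm x m k‖ := by
  unfold Fterm
  split_ifs
  · simp only [norm_prod]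
    exact Finset.prod_le_prod (fun i _ => norm_nonneg _) fun i _ => h (k i)
  · simp

theorem tsum_enorm_Fterm_le (x : ℕ → ℂ) (m : ℕ) :
    ∑' k, ‖Fterm x m k‖ₑ ≤ (∑' j, ‖x j * x (j + 1)‖ₑ) ^ m / m ! := by
  have hsupp : support (fun k => ‖Fterm x m k‖ₑ) ⊆ {k | StrictMono k} := fun k hk =>
    strictMono_of_Fterm_ne_zero (enorm_ne_zero.1 hk)
  calc ∑' k, ‖Fterm x m k‖ₑ = ∑' k : {k : Fin m → ℕ // StrictMono k}, ‖Fterm x m k‖ₑ :=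
        (tsum_subtype_eq_of_support_subset hsupp).symm
    _ ≤ ∑' k : {k : Fin m → ℕ // StrictMono k}, ∏ i, ‖x (k.1 i) * x (k.1 i + 1)‖ₑ :=
        ENNReal.tsum_le_tsum fun _ => enorm_Fterm_le_prod
    _ ≤ _ := ENNReal.tsum_strictMono_prod_le (fun j => ‖x j * x (j + 1)‖ₑ) m

end Fterm

section Estimates

variable {x : ℕ → ℂ}

theorem tsum_enorm_Fterm_le_ofReal (hx : Summable fun j => ‖x j * x (j + 1)‖) (m : ℕ) :
    ∑' k, ‖Fterm x m k‖ₑ ≤ ENNReal.ofReal ((∑' j, ‖x j * x (j + 1)‖) ^ m / m !) := by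
  rw [ENNReal.ofReal_div_of_pos (by positivity),
    ENNReal.ofReal_pow (tsum_nonneg fun _ => norm_nonneg _),
    ENNReal.ofReal_tsum_of_nonneg (fun _ => norm_nonneg _) hx, ENNReal.ofReal_natCast]
  simpa only [ofReal_norm] using tsum_enorm_Fterm_le x m

theorem summable_norm_Fterm (hx : Summable fun j => ‖x j * x (j + 1)‖) (m : ℕ) :
    Summable fun k => ‖Fterm x m k‖ :=
  tsum_enorm_ne_top_iff_summable_norm.1 <|
    ne_top_of_le_ne_top ENNReal.ofReal_ne_top (tsum_enorm_Fterm_le_ofReal hx m)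

theorem tsum_norm_Fterm_le (hx : Summable fun j => ‖x j * x (j + 1)‖) (m : ℕ) :
    ∑' k, ‖Fterm x m k‖ ≤ (∑' j, ‖x j * x (j + 1)‖) ^ m / m ! := by
  rw [← ENNReal.ofReal_le_ofReal_iff (by positivity),
    ENNReal.ofReal_tsum_of_nonneg (fun _ => norm_nonneg _) (summable_norm_Fterm hx m)]
  simpa only [ofReal_norm] using tsum_enorm_Fterm_le_ofReal hx m

theorem norm_tsum_Fterm_le_of_norm_le {y : ℕ → ℂ} (hx : Summable fun j => ‖x j * x (j + 1)‖)
    (h : ∀ j, ‖y j * y (j + 1)‖ ≤ ‖x j * x (j + 1)‖) (m : ℕ) :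
    ‖∑' k, Fterm y m k‖ ≤ (∑' j, ‖x j * x (j + 1)‖) ^ m / m ! :=
  (tsum_of_norm_bounded (summable_norm_Fterm hx m).hasSum fun _ =>
    norm_Fterm_le_of_norm_le h).trans (tsum_norm_Fterm_le hx m)

theorem norm_FF_sub_one_le (hx : Summable fun j => ‖x j * x (j + 1)‖) :
    ‖FF x - 1‖ ≤ Real.exp (∑' j, ‖x j * x (j + 1)‖) - 1 := by
  set s := ∑' j, ‖x j * x (j + 1)‖
  have hexp : HasSum (fun m : ℕ => s ^ (m + 1) / (m + 1)!) (Real.exp s - 1) := by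
    rw [Real.exp_eq_exp_ℝ]
    simpa using (hasSum_nat_add_iff' 1).2 (NormedSpace.expSeries_div_hasSum_exp s)
  rw [FF, add_sub_cancel_left]
  refine tsum_of_norm_bounded hexp fun m => ?_
  rw [norm_mul, norm_pow, norm_neg, norm_one, one_pow, one_mul]
  exact norm_tsum_Fterm_le_of_norm_le hx (fun _ => le_rfl) (m + 1)

theorem tendsto_FF_shift_atTop (hx : Summable fun j => ‖x j * x (j + 1)‖) :
    Tendsto (fun n => FF fun k => x (k + n)) atTop (𝓝 1) := by
  have htail : Tendsto (fun n => ∑' k, ‖x (k + n) * x (k + 1 + n)‖) atTop (𝓝 0) := by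
    simpa only [add_right_comm _ 1] using tendsto_sum_nat_add fun k => ‖x k * x (k + 1)‖
  have hbound :
      Tendsto (fun n => Real.exp (∑' k, ‖x (k + n) * x (k + 1 + n)‖) - 1) atTop (𝓝 0) := by
    simpa using ((Real.continuous_exp.tendsto 0).comp htail).sub_const 1
  rw [tendsto_iff_norm_sub_tendsto_zero]
  refine squeeze_zero (fun _ => norm_nonneg _) (fun n => norm_FF_sub_one_le ?_) hbound
  simpa only [add_right_comm _ 1] using (summable_nat_add_iff n).2 hx

theorem norm_truncate_mul_le (x : ℕ → ℂ) (n j : ℕ) :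
    ‖(if j < n then x j else 0) * (if j + 1 < n then x (j + 1) else 0)‖ ≤ ‖x j * x (j + 1)‖ := by
  split_ifs <;> simp [mul_nonneg]

theorem eventually_Fterm_truncate_eq (x : ℕ → ℂ) (m : ℕ) (k : Fin m → ℕ) :
    ∀ᶠ n in atTop, Fterm (fun j => if j < n then x j else 0) m k = Fterm x m k := by
  filter_upwards [eventually_gt_atTop (∑ i, (k i + 1))] with n hn
  have hk (i : Fin m) : k i + 1 < n :=
    (Finset.single_le_sum (fun i _ => Nat.zero_le (k i + 1)) (Finset.mem_univ i)).trans_lt hn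
  unfold Fterm
  congr 1
  refine Finset.prod_congr rfl fun i _ => ?_
  simp [hk i, (Nat.lt_succ_self _).trans (hk i)]

theorem tendsto_tsum_Fterm_truncate (hx : Summable fun j => ‖x j * x (j + 1)‖) (m : ℕ) :
    Tendsto (fun n => ∑' k, Fterm (fun j => if j < n then x j else 0) m k) atTop
      (𝓝 (∑' k, Fterm x m k)) :=
  tendsto_tsum_of_dominated_convergence (summable_norm_Fterm hx m)
    (fun k => tendsto_nhds_of_eventually_eq (eventually_Fterm_truncate_eq x m k))
    (Eventually.of_forall fun n _ => norm_Fterm_le_of_norm_le (norm_truncate_mul_le x n))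

theorem tendsto_FFfin_atTop (hx : Summable fun j => ‖x j * x (j + 1)‖) :
    Tendsto (fun n => FFfin n x) atTop (𝓝 (FF x)) := by
  refine tendsto_const_nhds.add <| tendsto_tsum_of_dominated_convergence
    (bound := fun m => (∑' j, ‖x j * x (j + 1)‖) ^ (m + 1) / (m + 1)!)
    ((summable_nat_add_iff 1).2 (Real.summable_pow_div_factorial _))
    (fun m => (tendsto_tsum_Fterm_truncate hx (m + 1)).const_mul _)
    (Eventually.of_forall fun n m => ?_)
  rw [norm_mul, norm_pow, norm_neg, norm_one, one_pow, one_mul]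
  exact norm_tsum_Fterm_le_of_norm_le hx (norm_truncate_mul_le x n) (m + 1)

end Estimates

theorem FF_limits (x : ℕ → ℂ) (hx : Summable fun k => ‖x k * x (k + 1)‖) :
    Filter.Tendsto (fun n : ℕ => FF fun k => x (k + n)) Filter.atTop (nhds 1) ∧
      Filter.Tendsto (fun n : ℕ => FFfin n x) Filter.atTop (nhds (FF x)) :=
  ⟨tendsto_FF_shift_atTop hx, tendsto_FFfin_atTop hx⟩
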